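/- arXiv:1709.04431 — 2 statements merged into one kernel-verified Lean document; each statement's English description precedes it below -/
import Mathlib

section
/- Let X be a finite pure n-dimensional weighted simplicial complex. For every 0 ≤ k ≤ n and every φ, ψ ∈ C^k(X,ℝ): (1) (k+1)! ⟨φ, ψ⟩ = Σ_{τ ∈ Σ(k−1)} ⟨φ_τ, ψ_τ⟩, and (2) k! ⟨δφ, δψ⟩ = Σ_{τ ∈ Σ(k−1)} ⟨δ_τ φ_τ, δ_τ ψ_τ⟩, where the inner products on the right-hand sides are taken in the links X_τ. -/
open Finset

variable {V : Type} [Fintype V] [DecidableEq V]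

/-- A finite abstract simplicial complex on the vertex type `V`. -/
structure SComplex (V : Type) [Fintype V] [DecidableEq V] where
  faces : Finset (Finset V)
  empty_mem : ∅ ∈ faces
  down_closed : ∀ s ∈ faces, ∀ t, t ⊆ s → t ∈ faces

namespace SComplex

/-- `X` is pure `n`-dimensional: every face is contained in an `n`-dimensional face. -/
def Pure (X : SComplex V) (n : ℕ) : Prop :=
  (∀ s ∈ X.faces, s.card ≤ n + 1) ∧
    ∀ s ∈ X.faces, ∃ t ∈ X.faces, s ⊆ t ∧ t.card = n + 1

/-- `σ` is an ordered simplex with `j` vertices (an element of `Σ(j-1)`). -/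
def IsOSimp (X : SComplex V) {j : ℕ} (σ : Fin j → V) : Prop :=
  Function.Injective σ ∧ Finset.image σ Finset.univ ∈ X.faces

instance {j : ℕ} (X : SComplex V) (σ : Fin j → V) : Decidable (X.IsOSimp σ) := by
  unfold IsOSimp; infer_instance

/-- A balanced, strictly positive weight function on the simplices of `X`. -/
def IsBalanced (X : SComplex V) (n : ℕ) (m : Finset V → ℝ) : Prop :=
  (∀ s ∈ X.faces, 0 < m s) ∧
    ∀ s ∈ X.faces, s.card ≤ n →
      m s = ∑ t ∈ X.faces.filter fun t => s ⊆ t ∧ t.card = s.card + 1, m t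

/-- The weight of an ordered tuple (zero off the ordered simplices). -/
noncomputable def wt (X : SComplex V) (m : Finset V → ℝ) {j : ℕ} (σ : Fin j → V) : ℝ :=
  if X.IsOSimp σ then m (Finset.image σ Finset.univ) else 0

/-- `φ` is a `j`-vertex form, i.e. an element of `C^{j-1}(X,ℝ)`:
antisymmetric and supported on the ordered simplices. -/
def IsForm (X : SComplex V) (j : ℕ) (φ : (Fin j → V) → ℝ) : Prop :=
  (∀ (σ : Fin j → V) (π : Equiv.Perm (Fin j)),
      φ (σ ∘ π) = ((Equiv.Perm.sign π : ℤ) : ℝ) * φ σ) ∧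
    ∀ σ : Fin j → V, ¬X.IsOSimp σ → φ σ = 0

/-- The inner product on `j`-vertex forms (`C^{j-1}(X,ℝ)`). -/
noncomputable def innerF (X : SComplex V) (m : Finset V → ℝ) (j : ℕ)
    (φ ψ : (Fin j → V) → ℝ) : ℝ :=
  ∑ σ : Fin j → V, X.wt m σ / (Nat.factorial j : ℝ) * (φ σ * ψ σ)

/-- The sum of a quantity over all ordered simplices with `j` vertices. -/
noncomputable def sumOSimp (X : SComplex V) (j : ℕ) (F : (Fin j → V) → ℝ) : ℝ :=
  ∑ σ : Fin j → V, if X.IsOSimp σ then F σ else 0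

/-- The simplicial differential `d`. -/
def dOp {j : ℕ} (φ : (Fin j → V) → ℝ) : (Fin (j + 1) → V) → ℝ :=
  fun σ => ∑ i : Fin (j + 1), (-1 : ℝ) ^ (i : ℕ) * φ (σ ∘ i.succAbove)

/-- The codifferential `δ` (the adjoint of `d`). -/
noncomputable def deltaOp (X : SComplex V) (m : Finset V → ℝ) {j : ℕ}
    (φ : (Fin (j + 1) → V) → ℝ) : (Fin j → V) → ℝ :=
  fun τ => ∑ v : V, X.wt m (Fin.cons v τ) / X.wt m τ * φ (Fin.cons v τ)

/-- The upper Laplacian `Δ⁺` on `j`-vertex forms (`C^{j-1}`). -/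
noncomputable def lapPlus (X : SComplex V) (m : Finset V → ℝ) (j : ℕ)
    (φ : (Fin j → V) → ℝ) : (Fin j → V) → ℝ :=
  X.deltaOp m (dOp φ)

/-- The lower Laplacian `Δ⁻` on `(j+1)`-vertex forms (`C^j`). -/
noncomputable def lapMinus (X : SComplex V) (m : Finset V → ℝ) (j : ℕ)
    (φ : (Fin (j + 1) → V) → ℝ) : (Fin (j + 1) → V) → ℝ :=
  dOp (X.deltaOp m φ)

/-- The set of eigenvalues of `Δ⁺` on `j`-vertex forms. -/
def specLapPlus (X : SComplex V) (m : Finset V → ℝ) (j : ℕ) : Set ℝ :=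
  {μ | ∃ φ : (Fin j → V) → ℝ, X.IsForm j φ ∧ φ ≠ 0 ∧ X.lapPlus m j φ = μ • φ}

/-- The set of eigenvalues of `Δ⁻` on `(j+1)`-vertex forms (`C^j`). -/
def specLapMinus (X : SComplex V) (m : Finset V → ℝ) (j : ℕ) : Set ℝ :=
  {μ | ∃ φ : (Fin (j + 1) → V) → ℝ, X.IsForm (j + 1) φ ∧ φ ≠ 0 ∧ X.lapMinus m j φ = μ • φ}

/-- The link of a face `s`. -/
def link (X : SComplex V) (s : Finset V) : SComplex V where
  faces := insert ∅ (X.faces.filter fun t => Disjoint s t ∧ s ∪ t ∈ X.faces)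
  empty_mem := Finset.mem_insert_self _ _
  down_closed := by
    intro a ha t hts
    rcases Finset.mem_insert.mp ha with h | h
    · refine Finset.mem_insert.mpr (Or.inl ?_)
      subst h; exact Finset.subset_empty.mp hts
    · rw [Finset.mem_filter] at h
      refine Finset.mem_insert.mpr (Or.inr (Finset.mem_filter.mpr
        ⟨X.down_closed a h.1 t hts, Disjoint.mono_right hts h.2.1,
          X.down_closed _ h.2.2 _ (Finset.union_subset_union (Finset.Subset.refl s) hts)⟩))

/-- The induced (balanced) weight on the link of `s`. -/
def linkWt (m : Finset V → ℝ) (s : Finset V) : Finset V → ℝ := fun t => m (s ∪ t)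

/-- The graph given by the 1-skeleton of `X`. -/
def skeleton (X : SComplex V) : SimpleGraph V where
  Adj u v := u ≠ v ∧ ({u, v} : Finset V) ∈ X.faces
  symm := by
    refine ⟨fun u v h => ?_⟩
    exact ⟨h.1.symm, by rw [Finset.pair_comm]; exact h.2⟩
  loopless := ⟨fun u h => h.1 rfl⟩

/-- The 1-skeleton of `X` is connected (on the vertices of `X`). -/
def SkelConnected (X : SComplex V) : Prop :=
  ∀ u v : V, ({u} : Finset V) ∈ X.faces → ({v} : Finset V) ∈ X.faces →
    X.skeleton.Reachable u v

/-- The 1-skeleton of `X` and the 1-skeletons of all links of `X` of dimension `> 0`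
are connected. -/
def AllLinksConnected (X : SComplex V) (n : ℕ) : Prop :=
  X.SkelConnected ∧ ∀ s ∈ X.faces, s.card < n → (X.link s).SkelConnected

/-- The localization `φ_τ ∈ C⁰(X_τ)` of a `(k+1)`-vertex form `φ` at an ordered
`k`-vertex simplex `τ`. -/
def localize {k : ℕ} (φ : (Fin (k + 1) → V) → ℝ) (τ : Fin k → V) : (Fin 1 → V) → ℝ :=
  fun σ => φ (Fin.append τ σ)

/-- The restriction of a cochain to the subcomplex `Y` (truncating off `Y`). -/
def restrict (Y : SComplex V) {j : ℕ} (φ : (Fin j → V) → ℝ) : (Fin j → V) → ℝ :=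
  fun σ => if Y.IsOSimp σ then φ σ else 0

/-- `S` is an `(n+1)`-partition of `X`: the vertices of `X` are partitioned into the
sides `S i`, and every edge joins two distinct sides. -/
def IsPartition (X : SComplex V) (n : ℕ) (S : Fin (n + 1) → Finset V) : Prop :=
  (∀ i, ∀ v ∈ S i, ({v} : Finset V) ∈ X.faces) ∧
    (∀ v : V, ({v} : Finset V) ∈ X.faces → ∃! i, v ∈ S i) ∧
    ∀ u v : V, u ≠ v → ({u, v} : Finset V) ∈ X.faces → ∀ i, u ∈ S i → v ∉ S i

/-- The side differential `d_{(k,j)}` with respect to the side `S`. -/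
def dSide (S : Finset V) {j : ℕ} (φ : (Fin j → V) → ℝ) : (Fin (j + 1) → V) → ℝ :=
  fun σ => ∑ i : Fin (j + 1),
    if σ i ∈ S then (-1 : ℝ) ^ (i : ℕ) * φ (σ ∘ i.succAbove) else 0

/-- The adjoint `δ_{(k,j)}` of the side differential. -/
noncomputable def deltaSide (X : SComplex V) (m : Finset V → ℝ) (S : Finset V) {j : ℕ}
    (φ : (Fin (j + 1) → V) → ℝ) : (Fin j → V) → ℝ :=
  fun τ => ∑ v ∈ S, X.wt m (Fin.cons v τ) / X.wt m τ * φ (Fin.cons v τ)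

/-- The side lower Laplacian `Δ⁻_{(k,j)}` on `(j+1)`-vertex forms (`C^j`). -/
noncomputable def lapMinusSide (X : SComplex V) (m : Finset V → ℝ) (S : Finset V) (j : ℕ)
    (φ : (Fin (j + 1) → V) → ℝ) : (Fin (j + 1) → V) → ℝ :=
  dSide S (X.deltaSide m S φ)

end SComplex

open SComplex

/-!
Write an ordered `(k+1)`-tuple as an ordered `k`-tuple `τ` followed by one vertex `v`. Then `τv` is
an ordered simplex of `X` exactly when `τ` is one and `v` is a vertex of the link `X_τ`, and
`m(τv) = m_τ(v)`; summing over `τ` first turns `(k+1)! ⟨φ, ψ⟩` into `∑_τ ⟨φ_τ, ψ_τ⟩`.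
For the codifferentials, `δ_τ φ_τ` takes the value `(-1)^k δφ(τ)` on the only `(-1)`-simplex of
`X_τ`, whose weight is `m(τ)`. The sign comes from moving `v` from the end of `τv`, where `φ_τ`
reads it, to the front, where `δ` inserts it; it squares away in the inner products.
-/

namespace SComplex

def IsAntisymm {α : Type*} {j : ℕ} (φ : (Fin j → α) → ℝ) : Prop :=
  ∀ (σ : Fin j → α) (π : Equiv.Perm (Fin j)), φ (σ ∘ π) = ((Equiv.Perm.sign π : ℤ) : ℝ) * φ σ

lemma image_cons_univ {α : Type*} [DecidableEq α] {k : ℕ} (v : α) (τ : Fin k → α) :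
    image (Fin.cons v τ) univ = insert v (image τ univ) := by
  apply coe_injective
  simp [Fin.range_cons]

lemma image_const_fin_one {α : Type*} [DecidableEq α] (v : α) :
    image (fun _ : Fin 1 => v) univ = {v} :=
  image_const univ_nonempty v

lemma IsOSimp.of_cons {X : SComplex V} {k : ℕ} {v : V} {τ : Fin k → V}
    (h : X.IsOSimp (Fin.cons v τ)) : X.IsOSimp τ := by
  refine ⟨(Fin.cons_injective_iff.mp h.1).2, X.down_closed _ h.2 _ ?_⟩
  rw [image_cons_univ]
  exact subset_insert _ _

lemma isOSimp_cons_iff {X : SComplex V} {k : ℕ} {τ : Fin k → V} (hτ : X.IsOSimp τ) (v : V) :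
    X.IsOSimp (Fin.cons v τ) ↔ v ∉ image τ univ ∧ insert v (image τ univ) ∈ X.faces := by
  have hrange : v ∈ Set.range τ ↔ v ∈ image τ univ := by simp [eq_comm]
  rw [IsOSimp, Fin.cons_injective_iff, image_cons_univ, hrange]
  exact ⟨fun ⟨⟨hv, _⟩, hf⟩ => ⟨hv, hf⟩, fun ⟨hv, hf⟩ => ⟨⟨hv, hτ.1⟩, hf⟩⟩

lemma link_isOSimp_const_iff (X : SComplex V) (s : Finset V) (v : V) :
    (X.link s).IsOSimp (fun _ : Fin 1 => v) ↔ v ∉ s ∧ insert v s ∈ X.faces := by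
  have hunion : s ∪ {v} = insert v s := by rw [union_comm, ← insert_eq]
  simp only [IsOSimp, link, image_const_fin_one, mem_insert, singleton_ne_empty, mem_filter,
    disjoint_singleton_right, hunion, false_or]
  refine ⟨fun ⟨_, _, hv, hf⟩ => ⟨hv, hf⟩, fun ⟨hv, hf⟩ =>
    ⟨Function.injective_of_subsingleton _, X.down_closed _ hf _ ?_, hv, hf⟩⟩
  simp

lemma wt_cons_eq_link_wt {X : SComplex V} (m : Finset V → ℝ) {k : ℕ} {τ : Fin k → V}
    (hτ : X.IsOSimp τ) (v : V) :
    X.wt m (Fin.cons v τ) =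
      (X.link (image τ univ)).wt (linkWt m (image τ univ)) (fun _ : Fin 1 => v) := by
  have hiff :
      X.IsOSimp (Fin.cons v τ) ↔ (X.link (image τ univ)).IsOSimp (fun _ : Fin 1 => v) := by
    rw [isOSimp_cons_iff hτ, link_isOSimp_const_iff]
  unfold wt
  split_ifs with h h' h'
  · rw [image_cons_univ, image_const_fin_one, linkWt, union_comm, ← insert_eq]
  · exact absurd (hiff.mp h) h'
  · exact absurd (hiff.mpr h') h
  · rfl

lemma wt_of_isOSimp {X : SComplex V} (m : Finset V → ℝ) {j : ℕ} {σ : Fin j → V}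
    (hσ : X.IsOSimp σ) : X.wt m σ = m (image σ univ) :=
  if_pos hσ

lemma wt_cons_of_not_isOSimp {X : SComplex V} (m : Finset V → ℝ) {k : ℕ} {τ : Fin k → V}
    (hτ : ¬X.IsOSimp τ) (v : V) : X.wt m (Fin.cons v τ) = 0 :=
  if_neg fun h => hτ h.of_cons

lemma link_wt_of_fin_zero (X : SComplex V) (m : Finset V → ℝ) (s : Finset V) (σ : Fin 0 → V) :
    (X.link s).wt (linkWt m s) σ = m s := by
  have himage : image σ univ = ∅ := by simp
  rw [wt, if_pos ⟨Function.injective_of_subsingleton _, himage ▸ (X.link s).empty_mem⟩, himage,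
    linkWt, union_empty]

lemma IsAntisymm.apply_snoc {α : Type*} {k : ℕ} {φ : (Fin (k + 1) → α) → ℝ}
    (hφ : IsAntisymm φ) (τ : Fin k → α) (v : α) :
    φ (Fin.snoc τ v) = (-1) ^ k * φ (Fin.cons v τ) := by
  have hrotate : Fin.cons v τ ∘ finRotate (k + 1) = Fin.snoc τ v :=
    (Fin.snoc_eq_cons_rotate τ v).symm
  rw [← hrotate, hφ, sign_finRotate]
  norm_num

lemma IsAntisymm.localize_apply_const {α : Type} {k : ℕ} {φ : (Fin (k + 1) → α) → ℝ}
    (hφ : IsAntisymm φ) (τ : Fin k → α) (v : α) :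
    localize φ τ (fun _ => v) = (-1) ^ k * φ (Fin.cons v τ) := by
  rw [localize, Fin.append_right_eq_snoc, hφ.apply_snoc]

lemma neg_one_pow_mul_mul_neg_one_pow_mul {R : Type*} [CommRing R] (k : ℕ) (a b : R) :
    (-1) ^ k * a * ((-1) ^ k * b) = a * b := by
  rw [mul_mul_mul_comm, ← mul_pow, neg_mul_neg, one_mul, one_pow, one_mul]

lemma factorial_mul_innerF (X : SComplex V) (m : Finset V → ℝ) (j : ℕ)
    (φ ψ : (Fin j → V) → ℝ) :
    (j.factorial : ℝ) * X.innerF m j φ ψ = ∑ σ, X.wt m σ * (φ σ * ψ σ) := by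
  have hj : (j.factorial : ℝ) ≠ 0 := by positivity
  rw [innerF, mul_sum]
  congr! 1
  field_simp

lemma sum_fun_fin_succ {α M : Type*} [Fintype α] [AddCommMonoid M] {k : ℕ}
    (f : (Fin (k + 1) → α) → M) : ∑ σ, f σ = ∑ τ : Fin k → α, ∑ v, f (Fin.cons v τ) := by
  rw [← Fintype.sum_equiv (Fin.consEquiv fun _ => α) _ _ fun _ => rfl, Fintype.sum_prod_type,
    sum_comm]
  rfl

lemma link_innerF_one_localize {X : SComplex V} (m : Finset V → ℝ) {k : ℕ} {τ : Fin k → V}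
    (hτ : X.IsOSimp τ) {φ ψ : (Fin (k + 1) → V) → ℝ} (hφ : IsAntisymm φ) (hψ : IsAntisymm ψ) :
    (X.link (image τ univ)).innerF (linkWt m (image τ univ)) 1 (localize φ τ) (localize ψ τ) =
      ∑ v, X.wt m (Fin.cons v τ) * (φ (Fin.cons v τ) * ψ (Fin.cons v τ)) := by
  have hinner := factorial_mul_innerF (X.link (image τ univ)) (linkWt m (image τ univ)) 1
    (localize φ τ) (localize ψ τ)
  rw [Nat.factorial_one, Nat.cast_one, one_mul] at hinner
  rw [hinner]
  refine Fintype.sum_equiv (Equiv.funUnique (Fin 1) V) _ _ fun σ => ?_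
  obtain ⟨v, rfl⟩ : ∃ v, σ = fun _ => v :=
    ⟨σ 0, funext fun i => congrArg σ (Subsingleton.elim _ _)⟩
  rw [hφ.localize_apply_const, hψ.localize_apply_const, neg_one_pow_mul_mul_neg_one_pow_mul,
    ← wt_cons_eq_link_wt m hτ]
  rfl

theorem factorial_mul_innerF_eq_sumOSimp_link (X : SComplex V) (m : Finset V → ℝ) {k : ℕ}
    {φ ψ : (Fin (k + 1) → V) → ℝ} (hφ : IsAntisymm φ) (hψ : IsAntisymm ψ) :
    ((k + 1).factorial : ℝ) * X.innerF m (k + 1) φ ψ =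
      X.sumOSimp k fun τ =>
        (X.link (image τ univ)).innerF (linkWt m (image τ univ)) 1
          (localize φ τ) (localize ψ τ) := by
  rw [factorial_mul_innerF, sum_fun_fin_succ, sumOSimp]
  refine sum_congr rfl fun τ _ => ?_
  split_ifs with hτ
  · exact (link_innerF_one_localize m hτ hφ hψ).symm
  · exact sum_eq_zero fun v _ => by rw [wt_cons_of_not_isOSimp m hτ, zero_mul]

lemma link_deltaOp_localize {X : SComplex V} (m : Finset V → ℝ) {k : ℕ} {τ : Fin k → V}
    (hτ : X.IsOSimp τ) {φ : (Fin (k + 1) → V) → ℝ} (hφ : IsAntisymm φ) (σ : Fin 0 → V) :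
    (X.link (image τ univ)).deltaOp (linkWt m (image τ univ)) (localize φ τ) σ =
      (-1) ^ k * X.deltaOp m φ τ := by
  rw [deltaOp, deltaOp, mul_sum]
  refine sum_congr rfl fun v _ => ?_
  have hconst : (Fin.cons v σ : Fin 1 → V) = fun _ => v :=
    funext fun i => Fin.cases rfl finZeroElim i
  rw [hconst, hφ.localize_apply_const, link_wt_of_fin_zero, ← wt_cons_eq_link_wt m hτ,
    wt_of_isOSimp m hτ]
  ring

lemma link_innerF_zero_deltaOp_localize {X : SComplex V} (m : Finset V → ℝ) {k : ℕ}
    {τ : Fin k → V} (hτ : X.IsOSimp τ) {φ ψ : (Fin (k + 1) → V) → ℝ} (hφ : IsAntisymm φ)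
    (hψ : IsAntisymm ψ) :
    (X.link (image τ univ)).innerF (linkWt m (image τ univ)) 0
        ((X.link (image τ univ)).deltaOp (linkWt m (image τ univ)) (localize φ τ))
        ((X.link (image τ univ)).deltaOp (linkWt m (image τ univ)) (localize ψ τ)) =
      X.wt m τ * (X.deltaOp m φ τ * X.deltaOp m ψ τ) := by
  have hinner := factorial_mul_innerF (X.link (image τ univ)) (linkWt m (image τ univ)) 0
    ((X.link (image τ univ)).deltaOp (linkWt m (image τ univ)) (localize φ τ))
    ((X.link (image τ univ)).deltaOp (linkWt m (image τ univ)) (localize ψ τ))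
  rw [Nat.factorial_zero, Nat.cast_one, one_mul] at hinner
  rw [hinner, Fintype.sum_unique, link_deltaOp_localize m hτ hφ, link_deltaOp_localize m hτ hψ,
    neg_one_pow_mul_mul_neg_one_pow_mul, link_wt_of_fin_zero, wt_of_isOSimp m hτ]

theorem factorial_mul_innerF_deltaOp_eq_sumOSimp_link (X : SComplex V) (m : Finset V → ℝ)
    {k : ℕ} {φ ψ : (Fin (k + 1) → V) → ℝ} (hφ : IsAntisymm φ) (hψ : IsAntisymm ψ) :
    (k.factorial : ℝ) * X.innerF m k (X.deltaOp m φ) (X.deltaOp m ψ) =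
      X.sumOSimp k fun τ =>
        (X.link (image τ univ)).innerF (linkWt m (image τ univ)) 0
          ((X.link (image τ univ)).deltaOp (linkWt m (image τ univ)) (localize φ τ))
          ((X.link (image τ univ)).deltaOp (linkWt m (image τ univ)) (localize ψ τ)) := by
  rw [factorial_mul_innerF, sumOSimp]
  refine sum_congr rfl fun τ _ => ?_
  split_ifs with hτ
  · exact (link_innerF_zero_deltaOp_localize m hτ hφ hψ).symm
  · rw [wt, if_neg hτ, zero_mul]

end SComplex

theorem localization_of_inner_products_general
    (X : SComplex V) (m : Finset V → ℝ)
    (k : ℕ)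
    (φ ψ : (Fin (k + 1) → V) → ℝ) (hφ : X.IsForm (k + 1) φ) (hψ : X.IsForm (k + 1) ψ) :
    ((Nat.factorial (k + 1) : ℝ) * X.innerF m (k + 1) φ ψ =
      X.sumOSimp k fun τ =>
        (X.link (Finset.image τ Finset.univ)).innerF
          (linkWt m (Finset.image τ Finset.univ)) 1 (localize φ τ) (localize ψ τ)) ∧
    (Nat.factorial k : ℝ) * X.innerF m k (X.deltaOp m φ) (X.deltaOp m ψ) =
      X.sumOSimp k fun τ =>
        (X.link (Finset.image τ Finset.univ)).innerF
          (linkWt m (Finset.image τ Finset.univ)) 0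
          ((X.link (Finset.image τ Finset.univ)).deltaOp
            (linkWt m (Finset.image τ Finset.univ)) (localize φ τ))
          ((X.link (Finset.image τ Finset.univ)).deltaOp
            (linkWt m (Finset.image τ Finset.univ)) (localize ψ τ)) :=
  ⟨factorial_mul_innerF_eq_sumOSimp_link X m hφ.1 hψ.1,
    factorial_mul_innerF_deltaOp_eq_sumOSimp_link X m hφ.1 hψ.1⟩

/-- Lemma 3.3: localization of the inner product and of the codifferential:
`(k+1)!⟨φ,ψ⟩ = ∑_{τ∈Σ(k-1)} ⟨φ_τ,ψ_τ⟩` and `k!⟨δφ,δψ⟩ = ∑_{τ∈Σ(k-1)} ⟨δ_τφ_τ,δ_τψ_τ⟩`. -/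
theorem localization_of_inner_products
    (X : SComplex V) (n : ℕ) (m : Finset V → ℝ)
    (hpure : X.Pure n) (hm : X.IsBalanced n m)
    (k : ℕ) (hk : k ≤ n)
    (φ ψ : (Fin (k + 1) → V) → ℝ) (hφ : X.IsForm (k + 1) φ) (hψ : X.IsForm (k + 1) ψ) :
    ((Nat.factorial (k + 1) : ℝ) * X.innerF m (k + 1) φ ψ =
      X.sumOSimp k fun τ =>
        (X.link (Finset.image τ Finset.univ)).innerF
          (linkWt m (Finset.image τ Finset.univ)) 1 (localize φ τ) (localize ψ τ)) ∧
    (Nat.factorial k : ℝ) * X.innerF m k (X.deltaOp m φ) (X.deltaOp m ψ) =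
      X.sumOSimp k fun τ =>
        (X.link (Finset.image τ Finset.univ)).innerF
          (linkWt m (Finset.image τ Finset.univ)) 0
          ((X.link (Finset.image τ Finset.univ)).deltaOp
            (linkWt m (Finset.image τ Finset.univ)) (localize φ τ))
          ((X.link (Finset.image τ Finset.univ)).deltaOp
            (linkWt m (Finset.image τ Finset.univ)) (localize ψ τ)) :=
  localization_of_inner_products_general X m k φ ψ hφ hψ
end

section
/- Let X be a finite pure n-dimensional weighted simplicial complex. For every 0 ≤ k ≤ n−1 and every φ, ψ ∈ C^k(X,ℝ): k! ⟨dφ, dψ⟩ + k!·k ⟨φ, ψ⟩ = Σ_{τ ∈ Σ(k−1)} ⟨d_τ φ_τ, d_τ ψ_τ⟩. In particular, for φ = ψ: k! ‖dφ‖² + k!·k ‖φ‖² = Σ_{τ ∈ Σ(k−1)} ‖d_τ φ_τ‖². -/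
open Finset

variable {V : Type} [Fintype V] [DecidableEq V]

open SComplex

/-!
Expanding `dφ` over the omitted vertex turns `⟨dφ, dψ⟩` into a double sum over pairs of
positions `(i, i')`. Every diagonal term equals `U = ∑ m(vτ) φ(τ) ψ(τ)` (`upPairing`), which is
the unnormalised `⟨φ, ψ⟩` because `m` is balanced; every off-diagonal term equals `-C` with
`C = ∑ m(uvσ) φ(vσ) ψ(uσ)` (`crossPairing`), the sign coming from alternation. Hence the
unnormalised `⟨dφ, dψ⟩` is `(k + 2) U - (k + 2)(k + 1) C`. The same computation on the link of
`τ`, in degree `0`, gives `⟨d_τ φ_τ, d_τ ψ_τ⟩ = U_τ - C_τ`, and summing over `τ` reassembles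
`U - C`.
-/

namespace Fin

variable {α : Type*}

theorem insertNth_insertNth_comp_succAbove_succAbove {n : ℕ} (i : Fin (n + 2)) (j : Fin (n + 1))
    (u v : α) (σ : Fin n → α) :
    insertNth i u (insertNth j v σ) ∘ (i.succAbove j).succAbove
      = insertNth (j.predAbove i) u σ := by
  funext r
  cases r using (j.predAbove i).succAboveCases <;>
    simp [succAbove_succAbove_predAbove, succAbove_succAbove_succAbove_predAbove]

theorem image_append {m n : ℕ} [DecidableEq α] (a : Fin m → α) (b : Fin n → α) :
    image (append a b) univ = image a univ ∪ image b univ := by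
  ext x
  simp only [mem_image, mem_univ, true_and, mem_union]
  constructor
  · rintro ⟨i, rfl⟩
    cases i using addCases <;> simp
  · rintro (⟨i, rfl⟩ | ⟨i, rfl⟩)
    exacts [⟨castAdd n i, append_left a b i⟩, ⟨natAdd m i, append_right a b i⟩]

theorem image_cons {n : ℕ} [DecidableEq α] (x : α) (a : Fin n → α) :
    image (cons x a) univ = insert x (image a univ) := by
  apply coe_injective
  simp [Fin.range_cons]

theorem image_insertNth {n : ℕ} [DecidableEq α] (p : Fin (n + 1)) (x : α) (a : Fin n → α) :
    image (insertNth p x a) univ = insert x (image a univ) := by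
  rw [← cons_comp_cycleRange, ← image_image, image_univ_equiv, image_cons]

theorem injective_iff_card_image_univ {n : ℕ} [DecidableEq α] (a : Fin n → α) :
    Function.Injective a ↔ #(image a univ) = n := by
  rw [← Set.injOn_univ, ← coe_univ, ← card_image_iff, card_fin]

theorem sum_fun_insertNth [Fintype α] {M : Type*} [AddCommMonoid M] {n : ℕ} (p : Fin (n + 1))
    (F : (Fin (n + 1) → α) → M) :
    ∑ ρ, F ρ = ∑ v : α, ∑ τ : Fin n → α, F (insertNth p v τ) := by
  rw [← (insertNthEquiv (fun _ => α) p).sum_comp, Fintype.sum_prod_type]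
  rfl

end Fin

theorem neg_one_pow_mul_self {R : Type*} [Monoid R] [HasDistribNeg R] (n : ℕ) :
    (-1 : R) ^ n * (-1) ^ n = 1 := by
  rw [← pow_add, Even.neg_one_pow ⟨n, rfl⟩]

def IsAlternating {α : Type*} {j : ℕ} (φ : (Fin j → α) → ℝ) : Prop :=
  ∀ (σ : Fin j → α) (π : Equiv.Perm (Fin j)), φ (σ ∘ π) = ((Equiv.Perm.sign π : ℤ) : ℝ) * φ σ

namespace IsAlternating

variable {α : Type*} {j : ℕ}

theorem of_fin_one (φ : (Fin 1 → α) → ℝ) : IsAlternating φ := by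
  intro σ π
  rw [Subsingleton.elim π 1]
  simp

theorem apply_insertNth {φ : (Fin (j + 1) → α) → ℝ} (hφ : IsAlternating φ) (p : Fin (j + 1))
    (v : α) (τ : Fin j → α) :
    φ (Fin.insertNth p v τ) = (-1) ^ (p : ℕ) * φ (Fin.cons v τ) := by
  rw [← Fin.cons_comp_cycleRange, hφ, Fin.sign_cycleRange]
  push_cast
  rfl

theorem apply_snoc {φ : (Fin (j + 1) → α) → ℝ} (hφ : IsAlternating φ) (v : α) (τ : Fin j → α) :
    φ (Fin.snoc τ v) = (-1) ^ j * φ (Fin.cons v τ) := by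
  rw [← Fin.insertNth_last', hφ.apply_insertNth, Fin.val_last]

end IsAlternating

namespace SComplex

variable {X : SComplex V} {m : Finset V → ℝ}

theorem IsForm.isAlternating {j : ℕ} {φ : (Fin j → V) → ℝ} (hφ : X.IsForm j φ) :
    IsAlternating φ :=
  hφ.1

theorem IsOSimp.comp {a b : ℕ} {ρ : Fin b → V} (hρ : X.IsOSimp ρ)
    {g : Fin a → Fin b} (hg : Function.Injective g) : X.IsOSimp (ρ ∘ g) :=
  ⟨hρ.1.comp hg, X.down_closed _ hρ.2 _ (by
    rw [← image_image]; exact image_subset_image (subset_univ _))⟩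

section

variable (X m)

noncomputable def pairing {j : ℕ} (φ ψ : (Fin j → V) → ℝ) : ℝ :=
  ∑ σ : Fin j → V, X.wt m σ * (φ σ * ψ σ)

noncomputable def upPairing {j : ℕ} (φ ψ : (Fin j → V) → ℝ) : ℝ :=
  ∑ v : V, ∑ τ : Fin j → V, X.wt m (Fin.cons v τ) * (φ τ * ψ τ)

noncomputable def crossPairing {j : ℕ} (φ ψ : (Fin (j + 1) → V) → ℝ) : ℝ :=
  ∑ u : V, ∑ v : V, ∑ σ : Fin j → V,
    X.wt m (Fin.cons u (Fin.cons v σ)) * (φ (Fin.cons v σ) * ψ (Fin.cons u σ))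

theorem wt_eq_zero_of_not_isOSimp_comp {a b : ℕ} {ρ : Fin b → V} {g : Fin a → Fin b}
    (hg : Function.Injective g) (h : ¬X.IsOSimp (ρ ∘ g)) : X.wt m ρ = 0 :=
  if_neg fun hρ => h (hρ.comp hg)

theorem wt_congr {j : ℕ} {ρ ρ' : Fin j → V} (h : image ρ univ = image ρ' univ) :
    X.wt m ρ = X.wt m ρ' := by
  have hsimp : X.IsOSimp ρ ↔ X.IsOSimp ρ' := by
    simp only [IsOSimp, Fin.injective_iff_card_image_univ, h]
  simp only [wt, hsimp, h]

theorem wt_insertNth {j : ℕ} (p : Fin (j + 1)) (v : V) (τ : Fin j → V) :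
    X.wt m (Fin.insertNth p v τ) = X.wt m (Fin.cons v τ) :=
  X.wt_congr m (by rw [Fin.image_insertNth, Fin.image_cons])

theorem innerF_eq_pairing_div {j : ℕ} (φ ψ : (Fin j → V) → ℝ) :
    X.innerF m j φ ψ = X.pairing m φ ψ / j.factorial := by
  simp only [innerF, pairing, sum_div]
  exact sum_congr rfl fun σ _ => by ring

end

theorem sum_wt_mul_comp_succAbove {j : ℕ} (φ ψ : (Fin j → V) → ℝ) (i : Fin (j + 1)) :
    ∑ ρ, X.wt m ρ * ((-1) ^ (i : ℕ) * φ (ρ ∘ i.succAbove) *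
        ((-1) ^ (i : ℕ) * ψ (ρ ∘ i.succAbove))) = X.upPairing m φ ψ := by
  rw [Fin.sum_fun_insertNth i]
  refine sum_congr rfl fun v _ => sum_congr rfl fun τ _ => ?_
  rw [Fin.insertNth_comp_succAbove, wt_insertNth]
  linear_combination (X.wt m (Fin.cons v τ) * (φ τ * ψ τ)) * neg_one_pow_mul_self (R := ℝ) (i : ℕ)

theorem sum_wt_mul_comp_succAbove_of_ne {j : ℕ} {φ ψ : (Fin (j + 1) → V) → ℝ}
    (hφ : IsAlternating φ) (hψ : IsAlternating ψ) (i : Fin (j + 2)) (i' : Fin (j + 1)) :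
    ∑ ρ, X.wt m ρ * ((-1) ^ (i : ℕ) * φ (ρ ∘ i.succAbove) *
        ((-1) ^ (i.succAbove i' : ℕ) * ψ (ρ ∘ (i.succAbove i').succAbove)))
      = -X.crossPairing m φ ψ := by
  have hsign : ((-1 : ℝ) ^ (i : ℕ) * (-1) ^ (i' : ℕ)) *
      ((-1) ^ (i.succAbove i' : ℕ) * (-1) ^ (i'.predAbove i : ℕ)) = -1 := by
    rw [← pow_add, ← pow_add, Fin.neg_one_pow_succAbove_add_predAbove, mul_neg,
      neg_one_pow_mul_self]
  simp only [crossPairing, ← sum_neg_distrib]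
  rw [Fin.sum_fun_insertNth i]
  refine sum_congr rfl fun u _ => ?_
  rw [Fin.sum_fun_insertNth i']
  refine sum_congr rfl fun v _ => sum_congr rfl fun σ _ => ?_
  rw [Fin.insertNth_comp_succAbove, Fin.insertNth_insertNth_comp_succAbove_succAbove,
    hφ.apply_insertNth, hψ.apply_insertNth, wt_insertNth,
    X.wt_congr m (ρ' := Fin.cons u (Fin.cons v σ))
      (by simp only [Fin.image_cons, Fin.image_insertNth])]
  linear_combination (X.wt m (Fin.cons u (Fin.cons v σ)) *
    (φ (Fin.cons v σ) * ψ (Fin.cons u σ))) * hsign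

theorem pairing_dOp {j : ℕ} {φ ψ : (Fin (j + 1) → V) → ℝ}
    (hφ : IsAlternating φ) (hψ : IsAlternating ψ) :
    X.pairing m (dOp φ) (dOp ψ)
      = (j + 2) * X.upPairing m φ ψ - (j + 2) * (j + 1) * X.crossPairing m φ ψ := by
  have hexpand : X.pairing m (dOp φ) (dOp ψ) = ∑ i : Fin (j + 2), ∑ i' : Fin (j + 2),
      ∑ ρ, X.wt m ρ * ((-1) ^ (i : ℕ) * φ (ρ ∘ i.succAbove) *
        ((-1) ^ (i' : ℕ) * ψ (ρ ∘ i'.succAbove))) := by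
    simp only [pairing, dOp]
    simp_rw [sum_mul_sum, mul_sum]
    rw [sum_comm]
    exact sum_congr rfl fun i _ => sum_comm
  have hrow : ∀ i : Fin (j + 2), ∑ i' : Fin (j + 2),
      ∑ ρ, X.wt m ρ * ((-1) ^ (i : ℕ) * φ (ρ ∘ i.succAbove) *
        ((-1) ^ (i' : ℕ) * ψ (ρ ∘ i'.succAbove)))
      = X.upPairing m φ ψ - (j + 1) * X.crossPairing m φ ψ := by
    intro i
    rw [Fin.sum_univ_succAbove _ i]
    simp only [sum_wt_mul_comp_succAbove, sum_wt_mul_comp_succAbove_of_ne hφ hψ, sum_const,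
      card_univ, Fintype.card_fin, nsmul_eq_mul]
    push_cast
    ring
  rw [hexpand, sum_congr rfl fun i _ => hrow i, sum_const, card_univ, Fintype.card_fin,
    nsmul_eq_mul]
  push_cast
  ring

theorem sum_wt_cons {n : ℕ} (hm : X.IsBalanced n m) {j : ℕ} (hj : j ≤ n) (σ : Fin j → V) :
    ∑ v : V, X.wt m (Fin.cons v σ) = X.wt m σ := by
  by_cases hσ : X.IsOSimp σ
  · set s := image σ univ
    have hcard : #s = j := (Fin.injective_iff_card_image_univ σ).mp hσ.1
    have hterm : ∀ v, X.wt m (Fin.cons v σ)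
        = if v ∉ s ∧ insert v s ∈ X.faces then m (insert v s) else 0 := by
      intro v
      simp [wt, IsOSimp, Fin.cons_injective_iff, Fin.image_cons, hσ.1, s]
    rw [sum_congr rfl fun v _ => hterm v, ← sum_filter, wt, if_pos hσ,
      hm.2 _ hσ.2 (hcard.symm ▸ hj)]
    refine sum_nbij (fun v => insert v s) ?_ ?_ ?_ fun _ _ => rfl
    · intro v hv
      simp only [mem_filter, mem_univ, true_and] at hv ⊢
      exact ⟨hv.2, subset_insert v s, card_insert_of_notMem hv.1⟩
    · intro v hv v' _ hvv'
      exact (insert_inj (mem_filter.mp hv).2.1).mp hvv'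
    · intro t ht
      simp only [coe_filter, Set.mem_ofPred_eq] at ht
      obtain ⟨v, hv, rfl⟩ := exists_eq_insert_iff.mpr ⟨ht.2.1, ht.2.2.symm⟩
      exact ⟨v, by simpa using ⟨hv, ht.1⟩, rfl⟩
  · rw [wt, if_neg hσ]
    exact sum_eq_zero fun v _ =>
      X.wt_eq_zero_of_not_isOSimp_comp m (Fin.succ_injective _) hσ

theorem upPairing_eq_pairing {n : ℕ} (hm : X.IsBalanced n m) {j : ℕ} (hj : j ≤ n)
    (φ ψ : (Fin j → V) → ℝ) : X.upPairing m φ ψ = X.pairing m φ ψ := by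
  rw [upPairing, sum_comm]
  exact sum_congr rfl fun σ _ => by rw [← sum_mul, sum_wt_cons hm hj]

theorem link_wt_eq {k j l : ℕ} {τ : Fin k → V} (hτ : X.IsOSimp τ) {ρ : Fin j → V}
    {ρ' : Fin l → V} (hl : l = k + j) (h : image ρ' univ = image τ univ ∪ image ρ univ) :
    (X.link (image τ univ)).wt (linkWt m (image τ univ)) ρ = X.wt m ρ' := by
  set s := image τ univ
  set t := image ρ univ with ht_def
  have hs : #s = k := (Fin.injective_iff_card_image_univ τ).mp hτ.1
  have ht : #t ≤ j := card_image_le.trans (card_fin j).le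
  have hiff : (X.link s).IsOSimp ρ ↔ X.IsOSimp ρ' := by
    simp only [IsOSimp, link, mem_insert, mem_filter, Fin.injective_iff_card_image_univ, h]
    simp only [← ht_def]
    constructor
    · rintro ⟨htj, ht0 | ⟨-, hdisj, hface⟩⟩
      · rw [ht0, card_empty] at htj
        rw [ht0, union_empty]
        exact ⟨by omega, hτ.2⟩
      · rw [card_union_of_disjoint hdisj]
        exact ⟨by omega, hface⟩
    · rintro ⟨hcard, hface⟩
      have hunion := card_union_add_card_inter s t
      have hdisj : Disjoint s t := disjoint_iff_inter_eq_empty.mpr (card_eq_zero.mp (by omega))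
      exact ⟨by omega, Or.inr ⟨X.down_closed _ hface _ subset_union_right, hdisj, hface⟩⟩
  rw [wt, wt, if_congr hiff rfl rfl, h]
  rfl

theorem link_innerF_dOp_localize {k : ℕ} {φ ψ : (Fin (k + 1) → V) → ℝ}
    (hφ : IsAlternating φ) (hψ : IsAlternating ψ) {τ : Fin k → V} (hτ : X.IsOSimp τ) :
    (X.link (image τ univ)).innerF (linkWt m (image τ univ)) 2
        (dOp (localize φ τ)) (dOp (localize ψ τ))
      = ∑ v : V, ∑ σ : Fin 1 → V, X.wt m (Fin.cons v (Fin.append τ σ)) *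
            (φ (Fin.append τ σ) * ψ (Fin.append τ σ))
        - ∑ u : V, ∑ v : V, X.wt m (Fin.cons u (Fin.cons v τ)) *
            (φ (Fin.cons v τ) * ψ (Fin.cons u τ)) := by
  have hup : (X.link (image τ univ)).upPairing (linkWt m (image τ univ))
      (localize φ τ) (localize ψ τ) = ∑ v : V, ∑ σ : Fin 1 → V,
        X.wt m (Fin.cons v (Fin.append τ σ)) * (φ (Fin.append τ σ) * ψ (Fin.append τ σ)) := by
    refine sum_congr rfl fun v _ => sum_congr rfl fun σ _ => ?_
    rw [link_wt_eq (ρ' := Fin.cons v (Fin.append τ σ)) hτ rfl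
      (by rw [Fin.image_cons, Fin.image_append, Fin.image_cons, union_insert])]
    rfl
  have hcross : (X.link (image τ univ)).crossPairing (linkWt m (image τ univ))
      (localize φ τ) (localize ψ τ) = ∑ u : V, ∑ v : V,
        X.wt m (Fin.cons u (Fin.cons v τ)) * (φ (Fin.cons v τ) * ψ (Fin.cons u τ)) := by
    refine sum_congr rfl fun u _ => sum_congr rfl fun v _ => ?_
    rw [Fintype.sum_unique, link_wt_eq (ρ' := Fin.cons u (Fin.cons v τ)) hτ rfl
      (by simp only [Fin.image_cons, univ_eq_empty, image_empty, union_insert, union_empty])]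
    simp only [localize, Fin.append_right_eq_snoc, Fin.cons_zero, hφ.apply_snoc, hψ.apply_snoc]
    linear_combination (X.wt m (Fin.cons u (Fin.cons v τ)) *
      (φ (Fin.cons v τ) * ψ (Fin.cons u τ))) * neg_one_pow_mul_self (R := ℝ) k
  rw [innerF_eq_pairing_div, pairing_dOp (.of_fin_one _) (.of_fin_one _), hup, hcross]
  norm_num [Nat.factorial]
  ring

theorem sumOSimp_link_innerF_dOp_localize {k : ℕ} {φ ψ : (Fin (k + 1) → V) → ℝ}
    (hφ : IsAlternating φ) (hψ : IsAlternating ψ) :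
    (X.sumOSimp k fun τ => (X.link (image τ univ)).innerF (linkWt m (image τ univ)) 2
        (dOp (localize φ τ)) (dOp (localize ψ τ)))
      = X.upPairing m φ ψ - X.crossPairing m φ ψ := by
  have hlocal : ∀ τ : Fin k → V, (if X.IsOSimp τ then
      (X.link (image τ univ)).innerF (linkWt m (image τ univ)) 2
        (dOp (localize φ τ)) (dOp (localize ψ τ)) else 0)
      = ∑ v : V, ∑ σ : Fin 1 → V, X.wt m (Fin.cons v (Fin.append τ σ)) *
            (φ (Fin.append τ σ) * ψ (Fin.append τ σ))
        - ∑ u : V, ∑ v : V, X.wt m (Fin.cons u (Fin.cons v τ)) *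
            (φ (Fin.cons v τ) * ψ (Fin.cons u τ)) := by
    intro τ
    split_ifs with hτ
    · exact link_innerF_dOp_localize hφ hψ hτ
    · have hup_zero : ∀ v (σ : Fin 1 → V), X.wt m (Fin.cons v (Fin.append τ σ)) = 0 :=
        fun v σ => X.wt_eq_zero_of_not_isOSimp_comp m
          ((Fin.succ_injective _).comp (Fin.castAdd_injective k 1))
          (by convert hτ using 2; ext i; simp)
      have hcross_zero : ∀ u v, X.wt m (Fin.cons u (Fin.cons v τ)) = 0 := fun u v =>
        X.wt_eq_zero_of_not_isOSimp_comp m ((Fin.succ_injective _).comp (Fin.succ_injective _)) hτ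
      simp [hup_zero, hcross_zero]
  rw [sumOSimp, sum_congr rfl fun τ _ => hlocal τ, sum_sub_distrib]
  congr 1
  · rw [sum_comm]
    refine sum_congr rfl fun v _ => ?_
    rw [← Fintype.sum_prod_type']
    exact (Fin.appendEquiv k 1).sum_comp fun ρ => X.wt m (Fin.cons v ρ) * (φ ρ * ψ ρ)
  · rw [crossPairing, sum_comm]
    exact sum_congr rfl fun u _ => sum_comm

theorem localization_inner_identity {n : ℕ} (hm : X.IsBalanced n m) {k : ℕ} (hk : k ≤ n - 1)
    {φ ψ : (Fin (k + 1) → V) → ℝ} (hφ : X.IsForm (k + 1) φ) (hψ : X.IsForm (k + 1) ψ) :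
    (k.factorial : ℝ) * X.innerF m (k + 2) (dOp φ) (dOp ψ) +
        k.factorial * k * X.innerF m (k + 1) φ ψ =
      X.sumOSimp k fun τ => (X.link (image τ univ)).innerF (linkWt m (image τ univ)) 2
        (dOp (localize φ τ)) (dOp (localize ψ τ)) := by
  have hbal : (k : ℝ) * X.upPairing m φ ψ = k * X.pairing m φ ψ := by
    rcases k.eq_zero_or_pos with rfl | hk0
    · simp
    · rw [upPairing_eq_pairing hm (by omega)]
  rw [sumOSimp_link_innerF_dOp_localize hφ.isAlternating hψ.isAlternating,
    innerF_eq_pairing_div, innerF_eq_pairing_div,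
    pairing_dOp hφ.isAlternating hψ.isAlternating, Nat.factorial_succ (k + 1),
    Nat.factorial_succ k]
  push_cast
  field_simp
  linear_combination (-(k : ℝ) - 2) * hbal

end SComplex

theorem localization_norm_identity_general
    (X : SComplex V) (n : ℕ) (m : Finset V → ℝ)
    (hm : X.IsBalanced n m)
    (k : ℕ) (hk : k ≤ n - 1)
    (φ ψ : (Fin (k + 1) → V) → ℝ) (hφ : X.IsForm (k + 1) φ) (hψ : X.IsForm (k + 1) ψ) :
    ((Nat.factorial k : ℝ) * X.innerF m (k + 2) (dOp φ) (dOp ψ) +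
        (Nat.factorial k : ℝ) * (k : ℝ) * X.innerF m (k + 1) φ ψ =
      X.sumOSimp k fun τ =>
        (X.link (Finset.image τ Finset.univ)).innerF
          (linkWt m (Finset.image τ Finset.univ)) 2
          (dOp (localize φ τ)) (dOp (localize ψ τ))) ∧
    (Nat.factorial k : ℝ) * X.innerF m (k + 2) (dOp φ) (dOp φ) +
        (Nat.factorial k : ℝ) * (k : ℝ) * X.innerF m (k + 1) φ φ =
      X.sumOSimp k fun τ =>
        (X.link (Finset.image τ Finset.univ)).innerF
          (linkWt m (Finset.image τ Finset.univ)) 2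
          (dOp (localize φ τ)) (dOp (localize φ τ)) := by
  exact ⟨localization_inner_identity hm hk hφ hψ, localization_inner_identity hm hk hφ hφ⟩

/-- Corollary 3.5: `k!⟨dφ,dψ⟩ + k!·k⟨φ,ψ⟩ = ∑_{τ∈Σ(k-1)} ⟨d_τφ_τ,d_τψ_τ⟩`,
and in particular `k!‖dφ‖² + k!·k‖φ‖² = ∑_{τ∈Σ(k-1)} ‖d_τφ_τ‖²`. -/
theorem localization_norm_identity
    (X : SComplex V) (n : ℕ) (m : Finset V → ℝ)
    (hpure : X.Pure n) (hm : X.IsBalanced n m)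
    (k : ℕ) (hk : k ≤ n - 1)
    (φ ψ : (Fin (k + 1) → V) → ℝ) (hφ : X.IsForm (k + 1) φ) (hψ : X.IsForm (k + 1) ψ) :
    ((Nat.factorial k : ℝ) * X.innerF m (k + 2) (dOp φ) (dOp ψ) +
        (Nat.factorial k : ℝ) * (k : ℝ) * X.innerF m (k + 1) φ ψ =
      X.sumOSimp k fun τ =>
        (X.link (Finset.image τ Finset.univ)).innerF
          (linkWt m (Finset.image τ Finset.univ)) 2
          (dOp (localize φ τ)) (dOp (localize ψ τ))) ∧
    (Nat.factorial k : ℝ) * X.innerF m (k + 2) (dOp φ) (dOp φ) +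
        (Nat.factorial k : ℝ) * (k : ℝ) * X.innerF m (k + 1) φ φ =
      X.sumOSimp k fun τ =>
        (X.link (Finset.image τ Finset.univ)).innerF
          (linkWt m (Finset.image τ Finset.univ)) 2
          (dOp (localize φ τ)) (dOp (localize φ τ)) :=
  localization_norm_identity_general X n m hm k hk φ ψ hφ hψ
end
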